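/- arXiv:2503.05140 — 2 statements merged into one kernel-verified Lean document; each statement's English description precedes it below -/
import Mathlib

section
/- Let N ∈ ℕ with N ≥ 2 and let γ satisfy the curve hypotheses with parameter N, and set ω := limsup_{t→0⁺} ln|γ(t)|/ln t. If p, q ∈ [1,∞] satisfy 1/q ≤ 1/p and 1 + (1+ω)(1/q − 1/p) > 0 (with the convention 1/∞ = 0), then the series ∑_{j∈ℤ, j≤0} 2ʲ·|2ʲγ(2ʲ)|^{1/q − 1/p} converges, i.e. ∑_{j≤0} 2ʲ|2ʲγ(2ʲ)|^{1/q−1/p} < ∞. -/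
/-!
Integrating the bound `t γ'(t) / γ(t) ≤ C` gives `|γ t| ≥ e^K t^C` near `0⁺`, so the ratio
`log |γ t| / log t` is bounded above there and its `limsup` `ω` is a genuine one. Hence for every
`a > ω` eventually `|γ t| > t ^ a`, and since `σ = 1/q - 1/p ≤ 0` the `n`-th term is at most
`(2⁻ⁿ) ^ (1 + (1 + a) σ)`. Choosing `a` close enough to `ω` makes this exponent positive, so the
series is dominated by a geometric one.
-/

open MeasureTheory Filter Set
open scoped ENNReal NNReal

noncomputable section

/-- The curve hypotheses with parameter `N`. -/
def CurveHyp (γ : ℝ → ℝ) (N : ℕ) : Prop :=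
  ContDiffOn ℝ N γ (Set.Ioc 0 1) ∧
  Filter.Tendsto γ (nhdsWithin 0 (Set.Ioi 0)) (nhds 0) ∧
  (MonotoneOn γ (Set.Ioc 0 1) ∨ AntitoneOn γ (Set.Ioc 0 1)) ∧
  (∀ j : ℕ, 1 ≤ j → j ≤ 2 → ∃ C : ℝ, 0 < C ∧ ∀ t ∈ Set.Ioc (0 : ℝ) 1,
    C ≤ |t ^ j * iteratedDerivWithin j γ (Set.Ioc 0 1) t / γ t|) ∧
  (∀ j : ℕ, 1 ≤ j → j ≤ N → ∃ C : ℝ, 0 < C ∧ ∀ t ∈ Set.Ioc (0 : ℝ) 1,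
    |t ^ j * iteratedDerivWithin j γ (Set.Ioc 0 1) t / γ t| ≤ C)

/-- `ω := limsup_{t→0⁺} ln|γ(t)| / ln t`. -/
def curveOmega (γ : ℝ → ℝ) : ℝ :=
  Filter.limsup (fun t => Real.log |γ t| / Real.log t) (nhdsWithin 0 (Set.Ioi 0))

open Real Topology

theorem monotoneOn_mul_log_sub_log_abs {f f' : ℝ → ℝ} {a b C : ℝ} (ha : 0 ≤ a)
    (hf : ∀ x ∈ Ioo a b, HasDerivAt f (f' x) x) (hne : ∀ x ∈ Ioo a b, f x ≠ 0)
    (hC : ∀ x ∈ Ioo a b, x * f' x / f x ≤ C) :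
    MonotoneOn (fun x => C * log x - log |f x|) (Ioo a b) := by
  have hx0 {x} (hx : x ∈ Ioo a b) : 0 < x := ha.trans_lt hx.1
  have hderiv : ∀ x ∈ Ioo a b,
      HasDerivAt (fun x => C * log x - log |f x|) (C * x⁻¹ - f' x / f x) x := by
    intro x hx
    simp only [log_abs]
    exact ((hasDerivAt_log (hx0 hx).ne').const_mul C).sub ((hf x hx).log (hne x hx))
  refine monotoneOn_of_deriv_nonneg (convex_Ioo a b)
    (fun x hx => (hderiv x hx).continuousAt.continuousWithinAt)
    (fun x hx => (hderiv x (interior_subset hx)).differentiableAt.differentiableWithinAt)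
    fun x hx => ?_
  rw [interior_Ioo] at hx
  rw [(hderiv x hx).deriv, sub_nonneg, ← div_eq_mul_inv, le_div_iff₀ (hx0 hx), mul_comm,
    ← mul_div_assoc]
  exact hC x hx

theorem isBoundedUnder_log_abs_div_log {g : ℝ → ℝ} {C K : ℝ}
    (h : ∀ᶠ t in 𝓝[>] 0, K + C * log t ≤ log |g t|) :
    IsBoundedUnder (· ≤ ·) (𝓝[>] 0) fun t => log |g t| / log t := by
  refine ⟨C + 1, eventually_map.2 ?_⟩
  filter_upwards [h, tendsto_log_nhdsGT_zero.eventually (eventually_lt_atBot (min K 0))]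
    with t hgt hlogt
  rw [div_le_iff_of_neg (hlogt.trans_le (min_le_right _ _))]
  nlinarith [min_le_left K 0]

theorem eventually_rpow_lt_abs_of_limsup_lt {g : ℝ → ℝ} {a : ℝ}
    (hbdd : IsBoundedUnder (· ≤ ·) (𝓝[>] 0) fun t => log |g t| / log t)
    (hne : ∀ᶠ t in 𝓝[>] 0, g t ≠ 0)
    (ha : limsup (fun t => log |g t| / log t) (𝓝[>] 0) < a) :
    ∀ᶠ t in 𝓝[>] 0, t ^ a < |g t| := by
  filter_upwards [eventually_lt_of_limsup_lt ha hbdd, hne,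
    Ioo_mem_nhdsGT (zero_lt_one' ℝ)] with t hlt hgt ht
  rw [div_lt_iff_of_neg (log_neg ht.1 ht.2)] at hlt
  rwa [← log_lt_log_iff (rpow_pos_of_pos ht.1 a) (abs_pos.2 hgt), log_rpow ht.1]

theorem mul_abs_mul_rpow_le {t y a σ : ℝ} (ht : 0 < t) (hy : t ^ a ≤ |y|) (hσ : σ ≤ 0) :
    t * |t * y| ^ σ ≤ t ^ (1 + (1 + a) * σ) := by
  have hty : t ^ (1 + a) ≤ |t * y| := by
    rw [rpow_add ht, rpow_one, abs_mul, abs_of_pos ht]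
    exact mul_le_mul_of_nonneg_left hy ht.le
  calc t * |t * y| ^ σ ≤ t * (t ^ (1 + a)) ^ σ :=
        mul_le_mul_of_nonneg_left (rpow_le_rpow_of_nonpos (by positivity) hty hσ) ht.le
    _ = t ^ (1 + (1 + a) * σ) := by rw [← rpow_mul ht.le, rpow_add ht, rpow_one]

theorem summable_comp_two_zpow_neg {F : ℝ → ℝ} {δ : ℝ} (hδ : 0 < δ)
    (hF : ∀ᶠ t in 𝓝[>] 0, |F t| ≤ t ^ δ) :
    Summable fun n : ℕ => F (2 ^ (-(n : ℤ))) := by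
  have hdyadic : Tendsto (fun n : ℕ => (2 : ℝ) ^ (-(n : ℤ))) atTop (𝓝[>] 0) := by
    simpa only [zpow_neg, zpow_natCast, inv_pow] using
      tendsto_pow_atTop_nhdsWithin_zero_of_lt_one (by norm_num : (0 : ℝ) < 2⁻¹) (by norm_num)
  have hratio : ((2 : ℝ) ^ δ)⁻¹ < 1 := inv_lt_one_of_one_lt₀ (one_lt_rpow (by norm_num) hδ)
  refine .of_norm_bounded_eventually_nat
    (summable_geometric_of_lt_one (by positivity) hratio) ((hdyadic.eventually hF).mono ?_)
  intro n hn
  rw [Real.norm_eq_abs]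
  convert hn using 1
  rw [inv_pow, ← rpow_mul_natCast (by norm_num), zpow_neg, zpow_natCast,
    inv_rpow (by positivity), ← rpow_natCast_mul (by norm_num), mul_comm]

namespace CurveHyp

variable {γ : ℝ → ℝ} {N : ℕ}

theorem ne_zero (h : CurveHyp γ N) {t : ℝ} (ht : t ∈ Ioc 0 1) : γ t ≠ 0 := by
  obtain ⟨C, hC, hCγ⟩ := h.2.2.2.1 1 le_rfl one_le_two
  intro hγt
  have := hCγ t ht
  rw [hγt, div_zero, abs_zero] at this
  exact hC.not_ge this

theorem hasDerivAt (h : CurveHyp γ N) (hN : 1 ≤ N) {x : ℝ} (hx : x ∈ Ioo 0 1) :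
    HasDerivAt γ (deriv γ x) x :=
  ((h.1.contDiffAt (mem_of_superset (isOpen_Ioo.mem_nhds hx) Ioo_subset_Ioc_self)).differentiableAt
    (by exact_mod_cast Nat.one_le_iff_ne_zero.1 hN)).hasDerivAt

theorem exists_mul_deriv_div_le (h : CurveHyp γ N) (hN : 1 ≤ N) :
    ∃ C, ∀ x ∈ Ioo 0 1, x * deriv γ x / γ x ≤ C := by
  obtain ⟨C, -, hCγ⟩ := h.2.2.2.2 1 le_rfl hN
  refine ⟨C, fun x hx => le_trans (le_abs_self _) ?_⟩
  have hγ' : iteratedDerivWithin 1 γ (Ioc 0 1) x = deriv γ x := by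
    rw [iteratedDerivWithin_one,
      derivWithin_of_mem_nhds (mem_of_superset (isOpen_Ioo.mem_nhds hx) Ioo_subset_Ioc_self)]
  simpa only [pow_one, hγ'] using hCγ x (Ioo_subset_Ioc_self hx)

theorem eventually_log_abs_ge (h : CurveHyp γ N) (hN : 1 ≤ N) :
    ∃ C K : ℝ, ∀ᶠ t in 𝓝[>] 0, K + C * log t ≤ log |γ t| := by
  obtain ⟨C, hC⟩ := h.exists_mul_deriv_div_le hN
  have hmono := monotoneOn_mul_log_sub_log_abs le_rfl (fun x hx => h.hasDerivAt hN hx)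
    (fun x hx => h.ne_zero (Ioo_subset_Ioc_self hx)) hC
  have hhalf : (1 / 2 : ℝ) ∈ Ioo 0 1 := by norm_num
  refine ⟨C, log |γ (1 / 2)| - C * log (1 / 2), ?_⟩
  filter_upwards [Ioc_mem_nhdsGT (by norm_num : (0 : ℝ) < 1 / 2)] with t ht
  have := hmono ⟨ht.1, ht.2.trans_lt hhalf.2⟩ hhalf ht.2
  dsimp only at this
  linarith

theorem eventually_rpow_lt_abs (h : CurveHyp γ N) (hN : 1 ≤ N) {a : ℝ} (ha : curveOmega γ < a) :
    ∀ᶠ t in 𝓝[>] 0, t ^ a < |γ t| := by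
  obtain ⟨C, K, hlog⟩ := h.eventually_log_abs_ge hN
  refine eventually_rpow_lt_abs_of_limsup_lt (isBoundedUnder_log_abs_div_log hlog) ?_ ha
  filter_upwards [Ioc_mem_nhdsGT (zero_lt_one' ℝ)] with t ht
  exact h.ne_zero ht

end CurveHyp

theorem sum_dyadic_converges_general (N : ℕ) (hN : 2 ≤ N) (γ : ℝ → ℝ) (h : CurveHyp γ N)
    (p q : ℝ≥0∞) (h1 : (q⁻¹).toReal ≤ (p⁻¹).toReal)
    (h2 : 0 < 1 + (1 + curveOmega γ) * ((q⁻¹).toReal - (p⁻¹).toReal)) :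
    Summable (fun n : ℕ =>
      (2 : ℝ) ^ (-(n : ℤ)) *
        |(2 : ℝ) ^ (-(n : ℤ)) * γ ((2 : ℝ) ^ (-(n : ℤ)))| ^
          ((q⁻¹).toReal - (p⁻¹).toReal)) := by
  set σ := (q⁻¹).toReal - (p⁻¹).toReal
  have hσ : σ ≤ 0 := sub_nonpos.2 h1
  have hδ : ∀ᶠ a in 𝓝 (curveOmega γ), 0 < 1 + (1 + a) * σ :=
    (by fun_prop : Continuous fun a => 1 + (1 + a) * σ).continuousAt.eventually (lt_mem_nhds h2)
  obtain ⟨a, hδa, hωa⟩ :=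
    ((hδ.filter_mono nhdsWithin_le_nhds).and (self_mem_nhdsWithin (s := Ioi (curveOmega γ)))).exists
  refine summable_comp_two_zpow_neg (F := fun t => t * |t * γ t| ^ σ) hδa ?_
  filter_upwards [h.eventually_rpow_lt_abs (by omega) hωa, self_mem_nhdsWithin] with t hγt ht
  have ht : 0 < t := ht
  rw [abs_of_nonneg (by positivity)]
  exact mul_abs_mul_rpow_le ht hγt.le hσ

/-- Lemma 2.3: convergence of `∑_{j ≤ 0} 2ʲ |2ʲ γ(2ʲ)|^{1/q - 1/p}` (the sum over
`j ∈ ℤ`, `j ≤ 0`, written as a sum over `n = -j ∈ ℕ`). -/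
theorem sum_dyadic_converges (N : ℕ) (hN : 2 ≤ N) (γ : ℝ → ℝ) (h : CurveHyp γ N)
    (p q : ℝ≥0∞) (hp : 1 ≤ p) (hq : 1 ≤ q)
    (h1 : (q⁻¹).toReal ≤ (p⁻¹).toReal)
    (h2 : 0 < 1 + (1 + curveOmega γ) * ((q⁻¹).toReal - (p⁻¹).toReal)) :
    Summable (fun n : ℕ =>
      (2 : ℝ) ^ (-(n : ℤ)) *
        |(2 : ℝ) ^ (-(n : ℤ)) * γ ((2 : ℝ) ^ (-(n : ℤ)))| ^
          ((q⁻¹).toReal - (p⁻¹).toReal)) :=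
  sum_dyadic_converges_general N hN γ h p q h1 h2

end
end

section
/- Let N ∈ ℕ with N ≥ 3 and let γ satisfy the curve hypotheses with parameter N. Let p, q, r ∈ [1,∞], and suppose there is a constant C such that ‖Tf‖_{L^r_u L^q_x(ℝ²×[1,2])} ≤ C‖f‖_{L^p(ℝ²)} for all f ∈ L^p(ℝ²). Then 1/q ≥ max{ 2/p − 1, 1/p − 1/3 } (with the convention 1/∞ = 0). -/
/-!
Test the estimate on the indicator of a parallelogram `Y` of width `δ` and height `4Bδ` with
two sides of slope `s`, where on a window `[a - δ, a + w]` the curve deviates from slope `s`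
by at most `B` (that is, `γ - s·id` is `B`-Lipschitz there). For every `u ∈ [1, 2]` and every
point `x` of a region `D_u` of area `≥ 2Bδw` lying just above the dilated curve, the translated
curve `x - u(t, γ t)` stays in `Y` for a `t`-interval of length `δ/u ≥ δ/2`, so `Tf(·, u) ≥ δ/2`
on `D_u`. Hence `δ (Bδw)^{1/q} ≲ (Bδ²)^{1/p}`, and letting `δ → 0`:
* a flat box (`s = 0`, `B`, `w` fixed) gives `2/p ≤ 1 + 1/q`;
* a box along the tangent at `1/4` (`s = γ'(1/4)`, `B ~ δ` by Taylor, `w = δ`) gives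
  `3/p ≤ 1 + 3/q`.
-/

open MeasureTheory Filter Set
open scoped ENNReal NNReal

noncomputable section

/-- The averaging operator along the dilated plane curve `(u t, u γ(t))`:
`Tf(x,u) = ∫_0^1 f(x₁ - u t, x₂ - u γ(t)) dt`. -/
def Tavg (γ : ℝ → ℝ) (f : ℝ × ℝ → ℝ) (x : ℝ × ℝ) (u : ℝ) : ℝ :=
  ∫ t in Set.Ioc (0 : ℝ) 1, f (x.1 - u * t, x.2 - u * γ t)

/-- The `L^q(μ)` norm (valued in `ℝ≥0∞`) of an `ℝ≥0∞`-valued function, with the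
essential supremum when `q = ∞`. -/
def eLpNormENN {α : Type*} [MeasurableSpace α] (g : α → ℝ≥0∞) (q : ℝ≥0∞)
    (μ : Measure α) : ℝ≥0∞ :=
  if q = ∞ then essSup g μ else (∫⁻ a, g a ^ q.toReal ∂μ) ^ (1 / q.toReal)


/-- The time-space mixed norm `‖F‖_{L^r_u L^q_x(ℝ² × [1,2])}`. -/
def mixedUX (r q : ℝ≥0∞) (F : ℝ × ℝ → ℝ → ℝ) : ℝ≥0∞ :=
  eLpNormENN (fun u => eLpNorm (fun x => F x u) q (volume : Measure (ℝ × ℝ))) r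
    ((volume : Measure ℝ).restrict (Set.Icc 1 2))

open Topology

def shearedBox (h : ℝ → ℝ) (I J : Set ℝ) : Set (ℝ × ℝ) :=
  {y | y.1 ∈ I ∧ y.2 - h y.1 ∈ J}

section ShearedBox

variable {h : ℝ → ℝ} {I J : Set ℝ}

lemma measurePreserving_shear (hh : Measurable h) :
    MeasurePreserving (fun y : ℝ × ℝ => (y.1, y.2 - h y.1)) := by
  rw [Measure.volume_eq_prod]
  exact (MeasurePreserving.id volume).skew_product (by fun_prop)
    (ae_of_all _ fun a => (measurePreserving_sub_right volume (h a)).map_eq)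

lemma shearedBox_eq_preimage :
    shearedBox h I J = (fun y : ℝ × ℝ => (y.1, y.2 - h y.1)) ⁻¹' I ×ˢ J := rfl

lemma measurableSet_shearedBox (hh : Measurable h) (hI : MeasurableSet I)
    (hJ : MeasurableSet J) : MeasurableSet (shearedBox h I J) :=
  (measurePreserving_shear hh).measurable (hI.prod hJ)

lemma volume_shearedBox (hh : Measurable h) (hI : MeasurableSet I) (hJ : MeasurableSet J) :
    volume (shearedBox h I J) = volume I * volume J := by
  rw [shearedBox_eq_preimage,
    (measurePreserving_shear hh).measure_preimage (hI.prod hJ).nullMeasurableSet,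
    Measure.volume_eq_prod, Measure.prod_prod]

end ShearedBox

lemma eLpNormENN_eq_eLpNorm {α : Type*} [MeasurableSpace α] {r : ℝ≥0∞} (g : α → ℝ≥0∞)
    (hr : r ≠ 0) (μ : Measure α) : eLpNormENN g r μ = eLpNorm g r μ := by
  unfold eLpNormENN
  split_ifs with hr_top
  · simp [hr_top, eLpNormEssSup]
  · simp [eLpNorm_eq_lintegral_rpow_enorm_toReal hr hr_top]

lemma le_eLpNormENN_of_ae_le {α : Type*} [MeasurableSpace α] {μ : Measure α}
    [IsProbabilityMeasure μ] {g : α → ℝ≥0∞} {r c : ℝ≥0∞} (hr : r ≠ 0)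
    (hc : ∀ᵐ a ∂μ, c ≤ g a) : c ≤ eLpNormENN g r μ := by
  rw [eLpNormENN_eq_eLpNorm g hr]
  calc c = eLpNorm (fun _ => c) r μ := by
        simp [eLpNorm_const c hr (IsProbabilityMeasure.ne_zero μ)]
    _ ≤ eLpNorm g r μ := eLpNorm_mono_enorm_ae (by simpa using hc)

lemma mul_measure_rpow_le_eLpNorm {α ε : Type*} [MeasurableSpace α] [TopologicalSpace ε]
    [ContinuousENorm ε] {μ : Measure α} {s : Set α} {g : α → ε} {c q : ℝ≥0∞} (hq : q ≠ 0)
    (hs : MeasurableSet s) (hμs : μ s ≠ 0) (hg : ∀ x ∈ s, c ≤ ‖g x‖ₑ) :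
    c * μ s ^ (q⁻¹).toReal ≤ eLpNorm g q μ := by
  calc c * μ s ^ (q⁻¹).toReal = eLpNorm (s.indicator fun _ => c) q μ := by
        simp [eLpNorm_indicator_const' hs hμs hq]
    _ ≤ eLpNorm g q μ := eLpNorm_mono_enorm fun x => by
        by_cases hx : x ∈ s <;> simp [hx, hg]

lemma measureReal_le_Tavg_indicator {γ : ℝ → ℝ} {Y : Set (ℝ × ℝ)} {I : Set ℝ} {x : ℝ × ℝ}
    {u : ℝ} (hγ : ContinuousOn γ (Ioc 0 1)) (hY : MeasurableSet Y) (hI : MeasurableSet I)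
    (hI₀₁ : I ⊆ Ioc 0 1) (hIY : ∀ t ∈ I, (x.1 - u * t, x.2 - u * γ t) ∈ Y) :
    volume.real I ≤ Tavg γ (Y.indicator fun _ => 1) x u := by
  have hcurve : AEMeasurable (fun t => (x.1 - u * t, x.2 - u * γ t))
      (volume.restrict (Ioc 0 1)) := by
    have := hγ.aemeasurable (μ := volume) measurableSet_Ioc
    fun_prop
  calc volume.real I = ∫ t in Ioc 0 1, I.indicator (1 : ℝ → ℝ) t := by
        rw [integral_indicator_one hI, measureReal_restrict_apply hI, inter_eq_left.2 hI₀₁]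
    _ ≤ Tavg γ (Y.indicator fun _ => 1) x u := by
        refine integral_mono_of_nonneg (ae_of_all _ fun t => ?_) ?_ (ae_of_all _ fun t => ?_)
        · exact indicator_nonneg (fun _ _ => zero_le_one) t
        · refine Integrable.of_bound (((measurable_const.indicator hY).comp_aemeasurable
            hcurve).aestronglyMeasurable) 1 (ae_of_all _ fun t => ?_)
          by_cases ht : (x.1 - u * t, x.2 - u * γ t) ∈ Y <;> simp [ht]
        · by_cases ht : t ∈ I <;> simp [ht, hIY, indicator_nonneg]

def knappBox (s B δ : ℝ) : Set (ℝ × ℝ) :=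
  shearedBox (fun y => s * y) (Ioc 0 δ) (Ioc (B * δ) (5 * (B * δ)))

section Knapp

variable {γ : ℝ → ℝ} {a s B δ w : ℝ}

lemma measurableSet_knappBox : MeasurableSet (knappBox s B δ) :=
  measurableSet_shearedBox (measurable_const_mul s) measurableSet_Ioc measurableSet_Ioc

lemma volume_knappBox (hδ : 0 < δ) :
    volume (knappBox s B δ) = ENNReal.ofReal (4 * B * δ ^ 2) := by
  rw [knappBox, volume_shearedBox (measurable_const_mul s) measurableSet_Ioc measurableSet_Ioc,
    Real.volume_Ioc, Real.volume_Ioc, ← ENNReal.ofReal_mul (by linarith)]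
  ring_nf

lemma half_le_Tavg_knappBox (hγ : ContinuousOn γ (Ioc 0 1))
    (hW : Icc (a - δ) (a + w) ⊆ Ioc 0 1)
    (hlip : ∀ t ∈ Icc (a - δ) (a + w), ∀ t' ∈ Icc (a - δ) (a + w),
      |γ t - γ t' - s * (t - t')| ≤ B * |t - t'|)
    (hB : 0 ≤ B) (hδ : 0 < δ) {u : ℝ} (hu : u ∈ Icc (1 : ℝ) 2) {x : ℝ × ℝ}
    (hx₁ : x.1 / u ∈ Ioc a (a + w))
    (hx₂ : x.2 - u * γ (x.1 / u) ∈ Ioc (2 * (B * δ)) (4 * (B * δ))) :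
    δ / 2 ≤ Tavg γ ((knappBox s B δ).indicator fun _ => 1) x u := by
  obtain ⟨hu₁, hu₂⟩ := hu
  have hu₀ : 0 < u := by linarith
  set τ := x.1 / u
  have hxτ : x.1 = u * τ := (mul_div_cancel₀ x.1 hu₀.ne').symm
  have hδu : δ / u ≤ δ := div_le_self hδ.le hu₁
  have hτW : τ ∈ Icc (a - δ) (a + w) := ⟨by linarith [hx₁.1], hx₁.2⟩
  have hIW : Ico (τ - δ / u) τ ⊆ Icc (a - δ) (a + w) := fun t ht =>
    ⟨by linarith [ht.1, hx₁.1], by linarith [ht.2, hx₁.2]⟩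
  calc δ / 2 ≤ δ / u := div_le_div_of_nonneg_left hδ.le hu₀ hu₂
    _ = volume.real (Ico (τ - δ / u) τ) := by
        rw [Real.volume_real_Ico_of_le (sub_le_self _ (by positivity))]; ring
    _ ≤ _ := measureReal_le_Tavg_indicator hγ measurableSet_knappBox measurableSet_Ico
        (hIW.trans hW) fun t ht => ?_
  have htW := hIW ht
  have hτt : 0 < τ - t := by linarith [ht.2]
  have hy₁ : x.1 - u * t = u * (τ - t) := by rw [hxτ]; ring
  have hy₁δ : u * (τ - t) ≤ δ :=
    calc u * (τ - t) ≤ u * (δ / u) := by gcongr; linarith [ht.1]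
      _ = δ := mul_div_cancel₀ δ hu₀.ne'
  have hdev : |u * (γ τ - γ t - s * (τ - t))| ≤ B * δ := by
    rw [abs_mul, abs_of_pos hu₀]
    calc u * |γ τ - γ t - s * (τ - t)| ≤ u * (B * (τ - t)) := by
          gcongr
          exact (hlip τ hτW t htW).trans_eq (by rw [abs_of_pos hτt])
      _ = B * (u * (τ - t)) := by ring
      _ ≤ B * δ := mul_le_mul_of_nonneg_left hy₁δ hB
  have hsplit : x.2 - u * γ t - s * (x.1 - u * t)
      = (x.2 - u * γ τ) + u * (γ τ - γ t - s * (τ - t)) := by rw [hxτ]; ring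
  refine ⟨⟨by rw [hy₁]; positivity, by rw [hy₁]; exact hy₁δ⟩, ?_⟩
  show x.2 - u * γ t - s * (x.1 - u * t) ∈ _
  rw [hsplit]
  have := abs_le.1 hdev
  constructor <;> linarith [hx₂.1, hx₂.2]

lemma knapp_le_eLpNorm_Tavg (hγ : ContinuousOn γ (Ioc 0 1))
    (hW : Icc (a - δ) (a + w) ⊆ Ioc 0 1)
    (hlip : ∀ t ∈ Icc (a - δ) (a + w), ∀ t' ∈ Icc (a - δ) (a + w),
      |γ t - γ t' - s * (t - t')| ≤ B * |t - t'|)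
    (hB : 0 < B) (hδ : 0 < δ) (hw : 0 < w) {q : ℝ≥0∞} (hq : q ≠ 0) {u : ℝ}
    (hu : u ∈ Icc (1 : ℝ) 2) :
    ENNReal.ofReal (δ / 2) * ENNReal.ofReal (2 * B * δ * w) ^ (q⁻¹).toReal
      ≤ eLpNorm (fun x => Tavg γ ((knappBox s B δ).indicator fun _ => 1) x u) q volume := by
  have hu₀ : 0 < u := by linarith [hu.1]
  -- `γ` is only continuous on `(0, 1]`; its extension by `0` makes the region below measurable
  set γ₀ := (Ioc 0 1).piecewise γ 0
  have hγ₀ : Measurable fun z => u * γ₀ (z / u) :=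
    measurable_const.mul ((hγ.measurable_piecewise continuousOn_const measurableSet_Ioc).comp
      (measurable_id.div_const u))
  set D := shearedBox (fun z => u * γ₀ (z / u)) (Ioc (u * a) (u * (a + w)))
    (Ioc (2 * (B * δ)) (4 * (B * δ)))
  have hvolD : ENNReal.ofReal (2 * B * δ * w) ≤ volume D := by
    rw [volume_shearedBox hγ₀ measurableSet_Ioc measurableSet_Ioc, Real.volume_Ioc,
      Real.volume_Ioc, ← ENNReal.ofReal_mul (by nlinarith)]
    apply ENNReal.ofReal_le_ofReal
    nlinarith [hu.1, mul_pos (mul_pos hB hδ) hw]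
  have hD₀ : volume D ≠ 0 := (lt_of_lt_of_le (ENNReal.ofReal_pos.2 (by positivity)) hvolD).ne'
  calc _ ≤ ENNReal.ofReal (δ / 2) * volume D ^ (q⁻¹).toReal := by gcongr
    _ ≤ _ := mul_measure_rpow_le_eLpNorm hq (measurableSet_shearedBox hγ₀ measurableSet_Ioc
        measurableSet_Ioc) hD₀ fun x hx => ?_
  obtain ⟨hx₁, hx₂⟩ := hx
  have hx₁' : x.1 / u ∈ Ioc a (a + w) :=
    ⟨(lt_div_iff₀ hu₀).2 (by linarith [hx₁.1]), (div_le_iff₀ hu₀).2 (by linarith [hx₁.2])⟩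
  have hγ₀x : γ₀ (x.1 / u) = γ (x.1 / u) :=
    piecewise_eq_of_mem _ _ _ (hW ⟨by linarith [hx₁'.1], hx₁'.2⟩)
  simp only [hγ₀x] at hx₂
  exact (ENNReal.ofReal_le_ofReal
    (half_le_Tavg_knappBox hγ hW hlip hB.le hδ hu hx₁' hx₂)).trans (Real.ofReal_le_enorm _)

lemma knapp_estimate (hγ : ContinuousOn γ (Ioc 0 1))
    (hW : Icc (a - δ) (a + w) ⊆ Ioc 0 1)
    (hlip : ∀ t ∈ Icc (a - δ) (a + w), ∀ t' ∈ Icc (a - δ) (a + w),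
      |γ t - γ t' - s * (t - t')| ≤ B * |t - t'|)
    (hB : 0 < B) (hδ : 0 < δ) (hw : 0 < w) {p q r : ℝ≥0∞} (hp : p ≠ 0) (hq : q ≠ 0)
    (hr : r ≠ 0) {C : ℝ} (hC : ∀ f : ℝ × ℝ → ℝ, MemLp f p volume →
      mixedUX r q (Tavg γ f) ≤ ENNReal.ofReal C * eLpNorm f p volume) :
    δ / 2 * (2 * B * δ * w) ^ (q⁻¹).toReal ≤ C * (4 * B * δ ^ 2) ^ (p⁻¹).toReal := by
  have hY₀ : volume (knappBox s B δ) ≠ 0 := by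
    rw [volume_knappBox hδ]; exact (ENNReal.ofReal_pos.2 (by positivity)).ne'
  have hf : MemLp ((knappBox s B δ).indicator fun _ => (1 : ℝ)) p volume :=
    memLp_indicator_const p measurableSet_knappBox 1
      (Or.inr (by rw [volume_knappBox hδ]; exact ENNReal.ofReal_ne_top))
  have hnorm : eLpNorm ((knappBox s B δ).indicator fun _ => (1 : ℝ)) p volume
      = ENNReal.ofReal (4 * B * δ ^ 2) ^ (p⁻¹).toReal := by
    simp [eLpNorm_indicator_const' measurableSet_knappBox hY₀ hp, volume_knappBox hδ]
  have : IsProbabilityMeasure (volume.restrict (Icc (1 : ℝ) 2)) := ⟨by norm_num⟩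
  have hmix := (le_eLpNormENN_of_ae_le hr (ae_restrict_of_forall_mem measurableSet_Icc
    fun u hu => knapp_le_eLpNorm_Tavg hγ hW hlip hB hδ hw hq hu)).trans (hC _ hf)
  rw [hnorm, ENNReal.ofReal_rpow_of_pos (by positivity),
    ENNReal.ofReal_rpow_of_pos (by positivity), ← ENNReal.ofReal_mul (by positivity),
    ← ENNReal.ofReal_mul' (by positivity), ENNReal.ofReal_le_ofReal_iff'] at hmix
  exact hmix.resolve_right (not_le.2 (by positivity))

end Knapp

lemma le_of_eventually_mul_rpow_le {K₁ K₂ σ₁ σ₂ : ℝ} (hK₁ : 0 < K₁)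
    (h : ∀ᶠ δ in 𝓝[>] 0, K₁ * δ ^ σ₁ ≤ K₂ * δ ^ σ₂) : σ₂ ≤ σ₁ := by
  by_contra! hσ
  have hlim : Tendsto (fun δ : ℝ => K₂ * δ ^ (σ₂ - σ₁)) (𝓝[>] 0) (𝓝 0) := by
    have := ((Real.continuous_rpow_const (sub_pos.2 hσ).le).tendsto 0).mono_left
      (nhdsWithin_le_nhds (s := Ioi 0))
    simpa [Real.zero_rpow (sub_pos.2 hσ).ne'] using this.const_mul K₂
  obtain ⟨δ, hδ, hδ₀ : 0 < δ, hsmall⟩ :=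
    (h.and (eventually_mem_nhdsWithin.and (hlim.eventually_lt_const hK₁))).exists
  have hsplit : K₂ * δ ^ σ₂ = K₂ * δ ^ (σ₂ - σ₁) * δ ^ σ₁ := by
    rw [mul_assoc, ← Real.rpow_add hδ₀, sub_add_cancel]
  nlinarith [Real.rpow_pos_of_pos hδ₀ σ₁]

lemma le_of_eventually_scaling {K c₁ c₂ C P Q : ℝ} {m n : ℕ} (hK : 0 < K) (hc₁ : 0 < c₁)
    (hc₂ : 0 < c₂) (h : ∀ᶠ δ in 𝓝[>] 0, K * δ * (c₁ * δ ^ m) ^ Q ≤ C * (c₂ * δ ^ n) ^ P) :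
    n * P ≤ 1 + m * Q := by
  refine le_of_eventually_mul_rpow_le (K₁ := K * c₁ ^ Q) (K₂ := C * c₂ ^ P) (by positivity) ?_
  filter_upwards [h, self_mem_nhdsWithin] with δ hδ (hδ₀ : 0 < δ)
  have hpow : ∀ (c R : ℝ) (k : ℕ), 0 < c → (c * δ ^ k) ^ R = c ^ R * δ ^ (k * R) :=
    fun c R k hc => by
      rw [Real.mul_rpow hc.le (by positivity), ← Real.rpow_natCast, ← Real.rpow_mul hδ₀.le]
  rw [hpow c₁ Q m hc₁, hpow c₂ P n hc₂] at hδ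
  rw [Real.rpow_add hδ₀, Real.rpow_one]
  linarith

lemma abs_sub_sub_mul_le_of_abs_deriv_sub_le {f : ℝ → ℝ} {S : Set ℝ} {c B t t' : ℝ}
    (hS : Convex ℝ S) (hf : ∀ z ∈ S, DifferentiableAt ℝ f z)
    (hB : ∀ z ∈ S, |deriv f z - c| ≤ B) (ht : t ∈ S) (ht' : t' ∈ S) :
    |f t - f t' - c * (t - t')| ≤ B * |t - t'| := by
  have := hS.norm_image_sub_le_of_norm_hasDerivWithin_le (f := fun z => f z - c * z)
    (fun z hz => (((hf z hz).hasDerivAt.sub ((hasDerivAt_id z).const_mul c))).hasDerivWithinAt)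
    (fun z hz => by simpa using hB z hz) ht' ht
  simp only [Real.norm_eq_abs] at this
  convert this using 2; ring

lemma ContDiffOn.exists_abs_deriv_le {f : ℝ → ℝ} {U K : Set ℝ} (hf : ContDiffOn ℝ 2 f U)
    (hU : IsOpen U) (hK : IsCompact K) (hKU : K ⊆ U) :
    ∃ M > 0, ∀ z ∈ K, DifferentiableAt ℝ f z ∧ DifferentiableAt ℝ (deriv f) z ∧
      |deriv f z| ≤ M ∧ |deriv (deriv f) z| ≤ M := by
  have hf' := hf.deriv_of_isOpen hU (m := 1) (by norm_num)
  have hf'' := hf'.deriv_of_isOpen hU (m := 0) (by norm_num)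
  obtain ⟨M₁, hM₁⟩ := hK.exists_bound_of_continuousOn (hf'.continuousOn.mono hKU)
  obtain ⟨M₂, hM₂⟩ := hK.exists_bound_of_continuousOn (hf''.continuousOn.mono hKU)
  refine ⟨max 1 (max M₁ M₂), by positivity, fun z hz => ⟨?_, ?_, ?_, ?_⟩⟩
  · exact (hf.contDiffAt (hU.mem_nhds (hKU hz))).differentiableAt (by norm_num)
  · exact (hf'.contDiffAt (hU.mem_nhds (hKU hz))).differentiableAt (by norm_num)
  · exact (hM₁ z hz).trans (by simp)
  · exact (hM₂ z hz).trans (by simp)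

section Necessity

variable {γ : ℝ → ℝ} {p q r : ℝ≥0∞} {C : ℝ}

lemma two_mul_inv_le_one_add_inv (hγ : ContDiffOn ℝ 2 γ (Ioc 0 1)) (hp : p ≠ 0) (hq : q ≠ 0)
    (hr : r ≠ 0) (hC : ∀ f : ℝ × ℝ → ℝ, MemLp f p volume →
      mixedUX r q (Tavg γ f) ≤ ENNReal.ofReal C * eLpNorm f p volume) :
    2 * (p⁻¹).toReal ≤ 1 + (q⁻¹).toReal := by
  obtain ⟨M, hM, hγM⟩ := (hγ.mono Ioo_subset_Ioc_self).exists_abs_deriv_le isOpen_Ioo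
    isCompact_Icc (Icc_subset_Ioo (by norm_num : (0 : ℝ) < 1 / 8) (by norm_num : (1 / 2 : ℝ) < 1))
  have hlip : ∀ t ∈ Icc (1 / 8 : ℝ) (1 / 2), ∀ t' ∈ Icc (1 / 8 : ℝ) (1 / 2),
      |γ t - γ t' - 0 * (t - t')| ≤ M * |t - t'| := fun t ht t' ht' =>
    abs_sub_sub_mul_le_of_abs_deriv_sub_le (convex_Icc _ _) (fun z hz => (hγM z hz).1)
      (fun z hz => by simpa using (hγM z hz).2.2.1) ht ht'
  suffices h : ∀ᶠ δ in 𝓝[>] 0, 1 / 2 * δ * (M / 2 * δ ^ 1) ^ (q⁻¹).toReal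
      ≤ C * (4 * M * δ ^ 2) ^ (p⁻¹).toReal by
    have := le_of_eventually_scaling (by norm_num) (by positivity) (by positivity) h
    push_cast at this; linarith
  filter_upwards [Ioc_mem_nhdsGT (show (0 : ℝ) < 1 / 8 by norm_num)] with δ ⟨hδ, hδ₈⟩
  have hW : Icc (1 / 4 - δ) (1 / 4 + 1 / 4) ⊆ Icc (1 / 8 : ℝ) (1 / 2) :=
    Icc_subset_Icc (by linarith) (by norm_num)
  have := knapp_estimate hγ.continuousOn (hW.trans (Icc_subset_Ioc (by norm_num) (by norm_num)))
    (fun t ht t' ht' => hlip t (hW ht) t' (hW ht')) hM hδ (by norm_num) hp hq hr hC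
  convert this using 3 <;> ring

lemma three_mul_inv_le_one_add_three_mul_inv (hγ : ContDiffOn ℝ 2 γ (Ioc 0 1)) (hp : p ≠ 0)
    (hq : q ≠ 0) (hr : r ≠ 0) (hC : ∀ f : ℝ × ℝ → ℝ, MemLp f p volume →
      mixedUX r q (Tavg γ f) ≤ ENNReal.ofReal C * eLpNorm f p volume) :
    3 * (p⁻¹).toReal ≤ 1 + 3 * (q⁻¹).toReal := by
  obtain ⟨M, hM, hγM⟩ := (hγ.mono Ioo_subset_Ioc_self).exists_abs_deriv_le isOpen_Ioo
    isCompact_Icc (Icc_subset_Ioo (by norm_num : (0 : ℝ) < 1 / 8) (by norm_num : (1 / 2 : ℝ) < 1))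
  suffices h : ∀ᶠ δ in 𝓝[>] 0, 1 / 2 * δ * (2 * M * δ ^ 3) ^ (q⁻¹).toReal
      ≤ C * (4 * M * δ ^ 3) ^ (p⁻¹).toReal by
    have := le_of_eventually_scaling (by norm_num) (by positivity) (by positivity) h
    push_cast at this; linarith
  filter_upwards [Ioc_mem_nhdsGT (show (0 : ℝ) < 1 / 8 by norm_num)] with δ ⟨hδ, hδ₈⟩
  have hW : Icc (1 / 4 - δ) (1 / 4 + δ) ⊆ Icc (1 / 8 : ℝ) (1 / 2) :=
    Icc_subset_Icc (by linarith) (by linarith)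
  have h14 : (1 / 4 : ℝ) ∈ Icc (1 / 4 - δ) (1 / 4 + δ) := ⟨by linarith, by linarith⟩
  have hγ' : ∀ z ∈ Icc (1 / 4 - δ) (1 / 4 + δ), |deriv γ z - deriv γ (1 / 4)| ≤ M * δ := by
    intro z hz
    have := abs_sub_sub_mul_le_of_abs_deriv_sub_le (c := 0) (convex_Icc _ _)
      (fun y hy => (hγM y (hW hy)).2.1) (fun y hy => by simpa using (hγM y (hW hy)).2.2.2) hz h14
    rw [zero_mul, sub_zero] at this
    exact this.trans (by gcongr; exact abs_le.2 ⟨by linarith [hz.1], by linarith [hz.2]⟩)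
  have := knapp_estimate hγ.continuousOn
    (hW.trans (Icc_subset_Ioc (by norm_num) (by norm_num)))
    (fun t ht t' ht' => abs_sub_sub_mul_le_of_abs_deriv_sub_le (convex_Icc _ _)
      (fun z hz => (hγM z (hW hz)).1) hγ' ht ht') (by positivity) hδ hδ hp hq hr hC
  convert this using 3 <;> ring

end Necessity

/-- Theorem 1.5, necessary condition (III): if the time-space estimate
`L^p_x → L^r_u L^q_x` holds for `T`, then `1/q ≥ max{2/p - 1, 1/p - 1/3}`. -/
theorem timeSpace_necessity_III (N : ℕ) (hN : 3 ≤ N) (γ : ℝ → ℝ) (h : CurveHyp γ N)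
    (p q r : ℝ≥0∞) (hp : 1 ≤ p) (hq : 1 ≤ q) (hr : 1 ≤ r)
    (hbdd : ∃ C : ℝ, ∀ f : ℝ × ℝ → ℝ, MemLp f p volume →
      mixedUX r q (Tavg γ f) ≤ ENNReal.ofReal C * eLpNorm f p volume) :
    max (2 * (p⁻¹).toReal - 1) ((p⁻¹).toReal - 1 / 3) ≤ (q⁻¹).toReal := by
  obtain ⟨C, hC⟩ := hbdd
  have hγ : ContDiffOn ℝ 2 γ (Ioc 0 1) := h.1.of_le (by exact_mod_cast hN.trans' (by norm_num))
  have hp₀ : p ≠ 0 := (zero_lt_one.trans_le hp).ne'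
  have hq₀ : q ≠ 0 := (zero_lt_one.trans_le hq).ne'
  have hr₀ : r ≠ 0 := (zero_lt_one.trans_le hr).ne'
  have ha := two_mul_inv_le_one_add_inv hγ hp₀ hq₀ hr₀ hC
  have hb := three_mul_inv_le_one_add_three_mul_inv hγ hp₀ hq₀ hr₀ hC
  exact max_le (by linarith) (by linarith)

end
end
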